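/- For any subsets J₁, J₂ ⊆ I, the intersection of the parabolic subgroups Γ_{J₁} and Γ_{J₂} of a graph product Γ equals Γ_{J₁ ∩ J₂}. -/

import Mathlib

/-- The commutation relators of a graph product along the graph with adjacency `adj`. -/
def graphProdRels {I : Type*} (adj : I → I → Prop) (G : I → Type*) [∀ i, Group (G i)] :
    Set (Monoid.CoprodI G) :=
  { x | ∃ (i j : I), adj i j ∧ ∃ (gi : G i) (gj : G j),
      x = Monoid.CoprodI.of gi * Monoid.CoprodI.of gj *
        (Monoid.CoprodI.of gi)⁻¹ * (Monoid.CoprodI.of gj)⁻¹ }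

/-- The graph product of the groups `G i` along the graph with adjacency relation `adj`:
the quotient of the free product by the normal closure of the commutation relators. -/
abbrev GraphProd {I : Type*} (adj : I → I → Prop) (G : I → Type*) [∀ i, Group (G i)] :
    Type _ :=
  Monoid.CoprodI G ⧸ Subgroup.normalClosure (graphProdRels adj G)

/-- The canonical homomorphism from a vertex group into the graph product. -/
def GraphProd.of {I : Type*} (adj : I → I → Prop) (G : I → Type*) [∀ i, Group (G i)]
    (i : I) : G i →* GraphProd adj G :=
  (QuotientGroup.mk' _).comp Monoid.CoprodI.of

/-- The parabolic subgroup `Γ_J` generated by the images of the `G j`, `j ∈ J`. -/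
def GraphProd.parab {I : Type*} (adj : I → I → Prop) (G : I → Type*) [∀ i, Group (G i)]
    (J : Set I) : Subgroup (GraphProd adj G) :=
  ⨆ j ∈ J, (GraphProd.of adj G j).range

/-! The retraction `Γ → Γ_J` killing the vertex groups outside `J` fixes `Γ_J` pointwise and
maps `Γ_{J'}` into `Γ_{J' ∩ J}`. Applied with `J = J₂` to an element of `Γ_{J₁} ∩ Γ_{J₂}`, it
shows that the element lies in `Γ_{J₁ ∩ J₂}`. -/

namespace GraphProd

variable {I : Type*} {adj : I → I → Prop} {G : I → Type*} [∀ i, Group (G i)]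

theorem of_commute {i j : I} (h : adj i j) (gi : G i) (gj : G j) :
    Commute (of adj G i gi) (of adj G j gj) := by
  rw [← commutatorElement_eq_one_iff_commute, commutatorElement_def]
  exact (QuotientGroup.eq_one_iff _).mpr
    (Subgroup.subset_normalClosure ⟨i, j, h, gi, gj, rfl⟩)

def lift {H : Type*} [Group H] (f : ∀ i, G i →* H)
    (hf : ∀ i j, adj i j → ∀ (gi : G i) (gj : G j), Commute (f i gi) (f j gj)) :
    GraphProd adj G →* H :=
  QuotientGroup.lift _ (Monoid.CoprodI.lift f) <| by
    refine Subgroup.normalClosure_le_normal ?_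
    rintro _ ⟨i, j, h, gi, gj, rfl⟩
    simp only [SetLike.mem_coe, MonoidHom.mem_ker, map_mul, map_inv, Monoid.CoprodI.lift_of]
    rw [← commutatorElement_def, commutatorElement_eq_one_iff_commute]
    exact hf i j h gi gj

@[simp]
theorem lift_of {H : Type*} [Group H] (f : ∀ i, G i →* H)
    (hf : ∀ i j, adj i j → ∀ (gi : G i) (gj : G j), Commute (f i gi) (f j gj))
    (i : I) (g : G i) : lift f hf (of adj G i g) = f i g :=
  Monoid.CoprodI.lift_of f g

theorem parab_le_iff {J : Set I} {H : Subgroup (GraphProd adj G)} :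
    parab adj G J ≤ H ↔ ∀ j ∈ J, ∀ g : G j, of adj G j g ∈ H := by
  rw [parab, iSup₂_le_iff]
  simp only [SetLike.le_def, MonoidHom.mem_range, forall_exists_index, forall_apply_eq_imp_iff]

theorem of_mem_parab {J : Set I} {j : I} (hj : j ∈ J) (g : G j) :
    of adj G j g ∈ parab adj G J :=
  le_iSup₂ (f := fun j _ => (of adj G j).range) j hj ⟨g, rfl⟩

theorem parab_mono {J J' : Set I} (h : J ⊆ J') : parab adj G J ≤ parab adj G J' :=
  parab_le_iff.mpr fun _ hj g => of_mem_parab (h hj) g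

open Classical in
noncomputable def retract (J : Set I) : GraphProd adj G →* GraphProd adj G :=
  lift (fun i => if i ∈ J then of adj G i else 1) fun i j h gi gj => by
    by_cases hi : i ∈ J <;> by_cases hj : j ∈ J <;>
      simp only [hi, hj, if_true, if_false, MonoidHom.one_apply, Commute.one_left,
        Commute.one_right]
    exact of_commute h gi gj

open Classical in
theorem retract_of (J : Set I) (i : I) (g : G i) :
    retract J (of adj G i g) = if i ∈ J then of adj G i g else 1 := by
  simp only [retract, lift_of]
  split_ifs <;> rfl

theorem retract_eq_self_of_mem_parab {J : Set I} {x : GraphProd adj G}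
    (hx : x ∈ parab adj G J) : retract J x = x := by
  have : parab adj G J ≤ (retract J).eqLocus (MonoidHom.id _) :=
    parab_le_iff.mpr fun j hj g => (retract_of J j g).trans (if_pos hj)
  exact this hx

theorem retract_mem_parab_inter (J : Set I) {J' : Set I} {x : GraphProd adj G}
    (hx : x ∈ parab adj G J') : retract J x ∈ parab adj G (J' ∩ J) := by
  have : parab adj G J' ≤ (parab adj G (J' ∩ J)).comap (retract J) :=
    parab_le_iff.mpr fun j hj' g => by
      rw [Subgroup.mem_comap, retract_of]
      split_ifs with hj
      · exact of_mem_parab (Set.mem_inter hj' hj) g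
      · exact one_mem _
  exact this hx

end GraphProd

theorem graphProd_parab_inter_general {I : Type*} (adj : I → I → Prop) (G : I → Type*)
    [∀ i, Group (G i)] (J₁ J₂ : Set I) :
    GraphProd.parab adj G J₁ ⊓ GraphProd.parab adj G J₂ = GraphProd.parab adj G (J₁ ∩ J₂) := by
  refine le_antisymm ?_ (le_inf (GraphProd.parab_mono Set.inter_subset_left)
    (GraphProd.parab_mono Set.inter_subset_right))
  rintro x ⟨h₁, h₂⟩
  simpa only [GraphProd.retract_eq_self_of_mem_parab h₂] using
    GraphProd.retract_mem_parab_inter J₂ h₁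

/-- Intersections of parabolic subgroups:
`Γ_{J₁} ⊓ Γ_{J₂} = Γ_{J₁ ∩ J₂}`. -/
theorem graphProd_parab_inter {I : Type*} (adj : I → I → Prop) (G : I → Type*)
    [∀ i, Group (G i)] (hsymm : Symmetric adj) (hirr : ∀ i, ¬ adj i i) (J₁ J₂ : Set I) :
    GraphProd.parab adj G J₁ ⊓ GraphProd.parab adj G J₂ = GraphProd.parab adj G (J₁ ∩ J₂) :=
  graphProd_parab_inter_general adj G J₁ J₂
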